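/- Let σ > 0, 0 < χ̂ < 2, and let U : ℝ → ℝ be non-increasing with 2/(2+χ̂) ≤ U(z) ≤ 1 for z ≤ 0 and U(z) = 0 for z > 0. Set P = ρ ⋆ U with ρ(x) = exp(-|x|/σ)/(2σ). Then for all z < σ·ln(1 - χ̂/2), one has σ·(P'(z) - P'(0)) ≥ (1/(2+χ̂))·(1 - χ̂/2 - exp(z/σ)) > 0. -/

import Mathlib

open MeasureTheory

noncomputable def P (σ : ℝ) (U : ℝ → ℝ) (z : ℝ) : ℝ :=
  (1 / (2 * σ)) * ∫ y, Real.exp (-|z - y| / σ) * U y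

open Real Set Filter

/-! Differentiating under the integral sign (the kernel is Lipschitz near `x` with an integrable
constant, and differentiable off the diagonal) gives
`2σ² P'(x) = ∫_{y > x} e^{(x-y)/σ} U y - ∫_{y ≤ x} e^{(y-x)/σ} U y`.
At `x = 0` the first integral vanishes and the second is at least `2σ/(2+χ)`. At `x = z < 0` the
second is at most `σ`, and the first is at least `2σ(1 - e^{z/σ})/(2+χ)`, coming from `z < y ≤ 0`
alone. Positivity of the bound is `e^{z/σ} < 1 - χ/2`. -/

theorem abs_exp_sub_exp_le_of_le {a b m : ℝ} (ha : a ≤ m) (hb : b ≤ m) :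
    |exp a - exp b| ≤ exp m * |a - b| := by
  wlog hba : b ≤ a generalizing a b
  · rw [abs_sub_comm, abs_sub_comm a]; exact this hb ha (le_of_not_ge hba)
  have hexp : exp a * (1 + (b - a)) ≤ exp b := by
    calc exp a * (1 + (b - a)) ≤ exp a * exp (b - a) := by
          gcongr; linarith [add_one_le_exp (b - a)]
      _ = exp b := by rw [← exp_add]; ring_nf
  rw [abs_of_nonneg (sub_nonneg.2 (exp_le_exp.2 hba)), abs_of_nonneg (sub_nonneg.2 hba)]
  nlinarith [exp_le_exp.2 ha]

variable {σ : ℝ}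

theorem integrableOn_exp_sub_div_Iic (hσ : 0 < σ) (x : ℝ) :
    IntegrableOn (fun y => exp ((y - x) / σ)) (Iic x) := by
  have := (integrableOn_exp_mul_Iic (inv_pos.2 hσ) x).mul_const (exp (-x / σ))
  refine IntegrableOn.congr_fun this (fun y _ => ?_) measurableSet_Iic
  simp only [← exp_add]; ring_nf

theorem integral_exp_sub_div_Iic (hσ : 0 < σ) (x : ℝ) :
    ∫ y in Iic x, exp ((y - x) / σ) = σ := by
  have h : ∀ y, exp ((y - x) / σ) = exp (σ⁻¹ * y) * exp (-x / σ) := fun y => by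
    rw [← exp_add]; ring_nf
  simp_rw [h]
  rw [integral_mul_const, integral_exp_mul_Iic (inv_pos.2 hσ), div_mul_eq_mul_div, ← exp_add]
  field_simp
  simp

theorem integrableOn_exp_sub_div_Ioi (hσ : 0 < σ) (x : ℝ) :
    IntegrableOn (fun y => exp ((x - y) / σ)) (Ioi x) := by
  have := (integrableOn_exp_mul_Ioi (neg_lt_zero.2 (inv_pos.2 hσ)) x).mul_const (exp (x / σ))
  refine IntegrableOn.congr_fun this (fun y _ => ?_) measurableSet_Ioi
  simp only [← exp_add]; ring_nf

theorem integrable_exp_neg_abs_sub_div (hσ : 0 < σ) (x : ℝ) :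
    Integrable (fun y => exp (-|x - y| / σ)) := by
  rw [← integrableOn_univ, ← Iic_union_Ioi (a := x)]
  refine .union (IntegrableOn.congr_fun (integrableOn_exp_sub_div_Iic hσ x) (fun y hy => ?_)
    measurableSet_Iic) (IntegrableOn.congr_fun (integrableOn_exp_sub_div_Ioi hσ x)
    (fun y hy => ?_) measurableSet_Ioi)
  · rw [abs_of_nonneg (sub_nonneg.2 hy), neg_sub]
  · rw [abs_of_neg (sub_neg.2 hy), neg_neg]

theorem integral_exp_sub_div_Ioc (hσ : σ ≠ 0) {z x : ℝ} (hzx : z ≤ x) :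
    ∫ y in Ioc z x, exp ((z - y) / σ) = σ * (1 - exp ((z - x) / σ)) := by
  rw [← intervalIntegral.integral_of_le hzx, intervalIntegral.integral_comp_sub_left
    (fun u => exp (u / σ)), intervalIntegral.integral_comp_div _ hσ, integral_exp]
  simp

theorem hasDerivAt_exp_neg_abs_sub_div {t y : ℝ} (h : t ≠ y) :
    HasDerivAt (fun s => exp (-|s - y| / σ))
      ((if t < y then 1 else -1) / σ * exp (-|t - y| / σ)) t := by
  have hsign : (if t < y then 1 else -1 : ℝ) = -(SignType.sign (t - y) : ℝ) := by
    rcases h.lt_or_gt with h | h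
    · simp [h, sign_neg (sub_neg.2 h)]
    · simp [h.not_gt, sign_pos (sub_pos.2 h)]
  have h := ((hasDerivAt_abs (sub_ne_zero.2 h)).comp_sub_const t y).const_mul (-σ⁻¹) |>.exp
  have hdiv : ∀ s, -|s - y| / σ = -σ⁻¹ * |s - y| := fun s => by ring
  simp only [hdiv, hsign]
  exact h.congr_deriv (by ring)

theorem lipschitzOnWith_exp_neg_abs_sub_div (hσ : 0 < σ) (x y : ℝ) :
    LipschitzOnWith (nnabs (exp (1 / σ) / σ * exp (-|x - y| / σ)))
      (fun t => exp (-|t - y| / σ)) (Metric.ball x 1) := by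
  have hm : ∀ t ∈ Metric.ball x 1, -|t - y| / σ ≤ (1 - |x - y|) / σ := fun t ht => by
    rw [Metric.mem_ball, dist_comm, dist_eq_norm, norm_eq_abs] at ht
    have := abs_sub_abs_le_abs_sub (x - y) (t - y)
    rw [sub_sub_sub_cancel_right] at this
    gcongr
    linarith
  refine LipschitzOnWith.of_dist_le_mul fun s hs t ht => ?_
  rw [coe_nnabs, abs_of_nonneg (a := exp (1 / σ) / σ * _) (by positivity), dist_eq_norm,
    dist_eq_norm, norm_eq_abs, norm_eq_abs]
  calc |exp (-|s - y| / σ) - exp (-|t - y| / σ)|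
      ≤ exp ((1 - |x - y|) / σ) * |-|s - y| / σ - -|t - y| / σ| :=
        abs_exp_sub_exp_le_of_le (hm s hs) (hm t ht)
    _ ≤ exp ((1 - |x - y|) / σ) * (|s - t| / σ) := by
        gcongr
        rw [← sub_div, abs_div, abs_of_pos hσ, neg_sub_neg, abs_sub_comm]
        refine div_le_div_of_nonneg_right ?_ hσ.le
        simpa using abs_abs_sub_abs_le_abs_sub (s - y) (t - y)
    _ = exp (1 / σ) / σ * exp (-|x - y| / σ) * |s - t| := by
        rw [div_mul_eq_mul_div, ← exp_add]; ring_nf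

noncomputable def backwardIntegral (σ : ℝ) (g : ℝ → ℝ) (x : ℝ) : ℝ :=
  ∫ y in Iic x, exp ((y - x) / σ) * g y

noncomputable def forwardIntegral (σ : ℝ) (g : ℝ → ℝ) (x : ℝ) : ℝ :=
  ∫ y in Ioi x, exp ((x - y) / σ) * g y

theorem integral_ite_mul_exp_neg_abs_sub_mul {g : ℝ → ℝ} {x : ℝ}
    (hint : Integrable fun y => (if x < y then 1 else -1) / σ * exp (-|x - y| / σ) * g y) :
    ∫ y, (if x < y then 1 else -1) / σ * exp (-|x - y| / σ) * g y
      = (forwardIntegral σ g x - backwardIntegral σ g x) / σ := by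
  rw [← intervalIntegral.integral_Iic_add_Ioi hint.integrableOn hint.integrableOn,
    backwardIntegral, forwardIntegral, sub_div, add_comm, sub_eq_add_neg, ← integral_div,
    ← integral_div, ← integral_neg]
  congr 1
  · refine setIntegral_congr_fun measurableSet_Ioi fun y (hy : x < y) => ?_
    rw [if_pos hy, abs_of_neg (sub_neg.2 hy), neg_neg]
    ring
  · refine setIntegral_congr_fun measurableSet_Iic fun y (hy : y ≤ x) => ?_
    rw [if_neg hy.not_gt, abs_of_nonneg (sub_nonneg.2 hy), neg_sub]
    ring

theorem lipschitzOnWith_exp_neg_abs_sub_div_mul (hσ : 0 < σ) {c C : ℝ} (hc : |c| ≤ C)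
    (x y : ℝ) :
    LipschitzOnWith (nnabs (exp (1 / σ) / σ * exp (-|x - y| / σ) * C))
      (fun t => exp (-|t - y| / σ) * c) (Metric.ball x 1) := by
  refine LipschitzOnWith.of_dist_le_mul fun s hs t ht => ?_
  have hk := (lipschitzOnWith_exp_neg_abs_sub_div hσ x y).dist_le_mul s hs t ht
  have hC : 0 ≤ C := (abs_nonneg c).trans hc
  rw [coe_nnabs, abs_of_nonneg (a := exp (1 / σ) / σ * _) (by positivity)] at hk
  rw [coe_nnabs, abs_of_nonneg (a := exp (1 / σ) / σ * _ * C) (by positivity), dist_eq_norm,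
    ← sub_mul, norm_mul, ← dist_eq_norm, norm_eq_abs]
  calc _ ≤ exp (1 / σ) / σ * exp (-|x - y| / σ) * dist s t * C :=
        mul_le_mul hk hc (abs_nonneg _) (by positivity)
    _ = _ := by ring

theorem hasDerivAt_integral_exp_neg_abs_sub_mul (hσ : 0 < σ) {g : ℝ → ℝ} {C : ℝ}
    (hg : Measurable g) (hgC : ∀ y, |g y| ≤ C) (x : ℝ) :
    HasDerivAt (fun t => ∫ y, exp (-|t - y| / σ) * g y)
      ((forwardIntegral σ g x - backwardIntegral σ g x) / σ) x := by
  have hK : ∀ t, Measurable fun y : ℝ => exp (-|t - y| / σ) := fun t => by fun_prop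
  have hF'_meas :
      Measurable fun y => (if x < y then 1 else -1) / σ * exp (-|x - y| / σ) * g y :=
    ((measurable_const.ite (measurableSet_lt measurable_const measurable_id)
      measurable_const).div_const σ).mul (hK x) |>.mul hg
  have hF_diff : ∀ᵐ y, HasDerivAt (fun t => exp (-|t - y| / σ) * g y)
      ((if x < y then 1 else -1) / σ * exp (-|x - y| / σ) * g y) x := by
    filter_upwards [(measure_eq_zero_iff_ae_notMem).1 (measure_singleton x)] with y hy
    exact (hasDerivAt_exp_neg_abs_sub_div (Ne.symm hy)).mul_const (g y)
  obtain ⟨hint, hder⟩ := hasDerivAt_integral_of_dominated_loc_of_lip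
    (Metric.ball_mem_nhds x one_pos)
    (.of_forall fun t => ((hK t).mul hg).aestronglyMeasurable)
    ((integrable_exp_neg_abs_sub_div hσ x).mul_bdd hg.aestronglyMeasurable (.of_forall hgC))
    hF'_meas.aestronglyMeasurable
    (.of_forall fun y => lipschitzOnWith_exp_neg_abs_sub_div_mul hσ (hgC y) x y)
    (((integrable_exp_neg_abs_sub_div hσ x).const_mul _).mul_const C) hF_diff
  rwa [integral_ite_mul_exp_neg_abs_sub_mul hint] at hder

theorem hasDerivAt_P (hσ : 0 < σ) {g : ℝ → ℝ} {C : ℝ} (hg : Measurable g)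
    (hgC : ∀ y, |g y| ≤ C) (x : ℝ) :
    HasDerivAt (P σ g) ((forwardIntegral σ g x - backwardIntegral σ g x) / (2 * σ ^ 2)) x := by
  refine ((hasDerivAt_integral_exp_neg_abs_sub_mul hσ hg hgC x).const_mul
    (1 / (2 * σ))).congr_deriv ?_
  field_simp

theorem mul_sub_deriv_P_eq (hσ : 0 < σ) {g : ℝ → ℝ} {C : ℝ} (hg : Measurable g)
    (hgC : ∀ y, |g y| ≤ C) (z x : ℝ) :
    σ * (deriv (P σ g) z - deriv (P σ g) x) =
      ((forwardIntegral σ g z - backwardIntegral σ g z)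
        - (forwardIntegral σ g x - backwardIntegral σ g x)) / (2 * σ) := by
  rw [(hasDerivAt_P hσ hg hgC z).deriv, (hasDerivAt_P hσ hg hgC x).deriv]
  field_simp

theorem integrableOn_exp_sub_div_mul_Iic (hσ : 0 < σ) {g : ℝ → ℝ} {C : ℝ}
    (hg : Measurable g) (hgC : ∀ y, |g y| ≤ C) (x : ℝ) :
    IntegrableOn (fun y => exp ((y - x) / σ) * g y) (Iic x) :=
  (integrableOn_exp_sub_div_Iic hσ x).mul_bdd hg.aestronglyMeasurable (.of_forall hgC)

theorem integrableOn_exp_sub_div_mul_Ioi (hσ : 0 < σ) {g : ℝ → ℝ} {C : ℝ}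
    (hg : Measurable g) (hgC : ∀ y, |g y| ≤ C) (x : ℝ) :
    IntegrableOn (fun y => exp ((x - y) / σ) * g y) (Ioi x) :=
  (integrableOn_exp_sub_div_Ioi hσ x).mul_bdd hg.aestronglyMeasurable (.of_forall hgC)

theorem backwardIntegral_le (hσ : 0 < σ) {g : ℝ → ℝ} (hg : Measurable g) (hg1 : ∀ y, |g y| ≤ 1)
    (x : ℝ) : backwardIntegral σ g x ≤ σ := by
  calc backwardIntegral σ g x ≤ ∫ y in Iic x, exp ((y - x) / σ) :=
        setIntegral_mono_on (integrableOn_exp_sub_div_mul_Iic hσ hg hg1 x)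
          (integrableOn_exp_sub_div_Iic hσ x) measurableSet_Iic fun y _ =>
          mul_le_of_le_one_right (exp_pos _).le ((le_abs_self _).trans (hg1 y))
    _ = σ := integral_exp_sub_div_Iic hσ x

theorem le_backwardIntegral (hσ : 0 < σ) {g : ℝ → ℝ} {a C x : ℝ} (hg : Measurable g)
    (hgC : ∀ y, |g y| ≤ C) (ha : ∀ y ≤ x, a ≤ g y) : a * σ ≤ backwardIntegral σ g x := by
  calc a * σ = ∫ y in Iic x, exp ((y - x) / σ) * a := by
        rw [integral_mul_const, integral_exp_sub_div_Iic hσ, mul_comm]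
    _ ≤ backwardIntegral σ g x :=
        setIntegral_mono_on ((integrableOn_exp_sub_div_Iic hσ x).mul_const a)
          (integrableOn_exp_sub_div_mul_Iic hσ hg hgC x) measurableSet_Iic fun y hy =>
          mul_le_mul_of_nonneg_left (ha y hy) (exp_pos _).le

theorem forwardIntegral_eq_zero {g : ℝ → ℝ} {x : ℝ} (hg : ∀ y, x < y → g y = 0) :
    forwardIntegral σ g x = 0 :=
  setIntegral_eq_zero_of_forall_eq_zero fun y hy => by rw [hg y hy, mul_zero]

theorem le_forwardIntegral (hσ : 0 < σ) {g : ℝ → ℝ} {a C z x : ℝ} (hg : Measurable g)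
    (hgC : ∀ y, |g y| ≤ C) (hg0 : ∀ y, 0 ≤ g y) (hzx : z ≤ x) (ha : ∀ y ∈ Ioc z x, a ≤ g y) :
    a * σ * (1 - exp ((z - x) / σ)) ≤ forwardIntegral σ g z := by
  have hint := integrableOn_exp_sub_div_mul_Ioi hσ hg hgC z
  calc a * σ * (1 - exp ((z - x) / σ)) = ∫ y in Ioc z x, exp ((z - y) / σ) * a := by
        rw [integral_mul_const, integral_exp_sub_div_Ioc hσ.ne' hzx]; ring
    _ ≤ ∫ y in Ioc z x, exp ((z - y) / σ) * g y :=
        setIntegral_mono_on (Continuous.integrableOn_Ioc (by fun_prop))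
          (hint.mono_set Ioc_subset_Ioi_self) measurableSet_Ioc fun y hy =>
          mul_le_mul_of_nonneg_left (ha y hy) (exp_pos _).le
    _ ≤ forwardIntegral σ g z :=
        setIntegral_mono_set hint (.of_forall fun y => mul_nonneg (exp_pos _).le (hg0 y))
          Ioc_subset_Ioi_self.eventuallyLE

theorem nonneg_and_abs_le_one_of_le_of_le {a : ℝ} (ha : 0 ≤ a) {U : ℝ → ℝ}
    (hlb : ∀ z ≤ 0, a ≤ U z) (hub : ∀ z ≤ 0, U z ≤ 1) (hz : ∀ z, 0 < z → U z = 0) (y : ℝ) :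
    0 ≤ U y ∧ |U y| ≤ 1 := by
  rcases le_or_gt y 0 with hy | hy
  · have h0 := ha.trans (hlb y hy)
    exact ⟨h0, (abs_of_nonneg h0).trans_le (hub y hy)⟩
  · simp [hz y hy]

theorem pressure_deriv_gap (σ χ : ℝ) (hσ : 0 < σ) (hχ0 : 0 < χ) (hχ2 : χ < 2)
    (U : ℝ → ℝ) (hmono : Antitone U)
    (hlb : ∀ z ≤ 0, 2 / (2 + χ) ≤ U z) (hub : ∀ z ≤ 0, U z ≤ 1)
    (hz : ∀ z, 0 < z → U z = 0) :
    ∀ z < σ * Real.log (1 - χ / 2),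
      (1 / (2 + χ)) * (1 - χ / 2 - Real.exp (z / σ)) ≤
        σ * (deriv (P σ U) z - deriv (P σ U) 0) ∧
      0 < (1 / (2 + χ)) * (1 - χ / 2 - Real.exp (z / σ)) := by
  intro z hzlt
  have hχ : 0 < 1 - χ / 2 := by linarith
  have hz0 : z < 0 :=
    hzlt.trans_le (mul_nonpos_of_nonneg_of_nonpos hσ.le (log_nonpos hχ.le (by linarith)))
  have hE : exp (z / σ) < 1 - χ / 2 := by rwa [← lt_log_iff_exp_lt hχ, div_lt_iff₀' hσ]
  refine ⟨?_, mul_pos (by positivity) (by linarith)⟩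
  have hU0 y := (nonneg_and_abs_le_one_of_le_of_le (by positivity) hlb hub hz y).1
  have hU1 y := (nonneg_and_abs_le_one_of_le_of_le (by positivity) hlb hub hz y).2
  have hU := hmono.measurable
  have hFz := le_forwardIntegral hσ hU hU1 hU0 hz0.le fun y hy => hlb y hy.2
  rw [sub_zero] at hFz
  rw [mul_sub_deriv_P_eq hσ hU hU1]
  calc 1 / (2 + χ) * (1 - χ / 2 - exp (z / σ))
      = (2 / (2 + χ) * σ * (1 - exp (z / σ)) + 2 / (2 + χ) * σ - σ) / (2 * σ) := by
        field_simp; ring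
    _ ≤ _ := div_le_div_of_nonneg_right (by
        linarith [backwardIntegral_le hσ hU hU1 z, le_backwardIntegral hσ hU hU1 (x := 0) hlb,
          forwardIntegral_eq_zero (σ := σ) hz]) (by positivity)
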